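/- Let S be an Arf numerical semigroup with multiplicity 5 and conductor s > 5 with s ≡ 2 (mod 5). Then S = ⟨5, s, s+1, s+2, s+4⟩, PF(S) = {s−5, s−4, s−3, s−1}, and the unique RF-matrix of the pseudo-Frobenius number s−5 is the 5×5 matrix with rows (−1, 1, 0, 0, 0), ((s−7)/5, −1, 0, 1, 0), ((2s−4)/5, 0, −1, 0, 0), ((s−7)/5, 0, 0, −1, 1), ((s−2)/5, 0, 1, 0, −1). -/

import Mathlib

/-!
Let `s ≡ 2 (mod 5)` be the conductor. If some `n < s` in `S` were not a multiple of `5`, one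
or two Arf steps `y ↦ 2y - x` against a neighbouring multiple of `5` would give an element
`m < s` with `m ≡ 1 ≡ s - 1 (mod 5)`, and adding fives would put `s - 1` in `S`. Hence
`S = 5ℕ ∪ [s, ∞)`, from which the generators and the pseudo-Frobenius numbers are read off.
A row of an RF-matrix of `s - 5` represents a number below `2s` by the other generators, so it
uses at most one generator besides `5`, and that one is pinned down modulo `5`.
-/

/-- `S ⊆ ℕ` is a numerical semigroup: contains `0`, closed under addition,
and has finite complement in `ℕ`. -/
def IsNumericalSemigroup (S : Set ℕ) : Prop :=
  0 ∈ S ∧ (∀ a ∈ S, ∀ b ∈ S, a + b ∈ S) ∧ (Sᶜ).Finite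

/-- `S` satisfies the Arf condition: for `x ≤ y` in `S`, `2y - x ∈ S`. -/
def IsArf (S : Set ℕ) : Prop :=
  ∀ x ∈ S, ∀ y ∈ S, x ≤ y → 2 * y - x ∈ S

/-- `m` is the multiplicity of `S`: the smallest nonzero element. -/
def HasMultiplicity (S : Set ℕ) (m : ℕ) : Prop :=
  m ∈ S ∧ m ≠ 0 ∧ ∀ n ∈ S, n ≠ 0 → m ≤ n

/-- `s` is the conductor of `S`: the least `t` with `[t, ∞) ⊆ S`. -/
def HasConductor (S : Set ℕ) (s : ℕ) : Prop :=
  (∀ n, s ≤ n → n ∈ S) ∧ ∀ t, (∀ n, t ≤ n → n ∈ S) → s ≤ t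

/-- The set of pseudo-Frobenius numbers of `S`. -/
def pseudoFrobeniusSet (S : Set ℕ) : Set ℕ :=
  {z | z ∉ S ∧ ∀ n ∈ S, n ≠ 0 → z + n ∈ S}

/-- `A` is a row-factorization (RF-) matrix of `f` with respect to generators `n`:
diagonal entries are `-1`, off-diagonal entries are nonnegative, and every row
gives a representation of `f` in terms of the generators. -/
def IsRFMatrix {e : ℕ} (n : Fin e → ℕ) (f : ℤ) (A : Matrix (Fin e) (Fin e) ℤ) : Prop :=
  (∀ i, A i i = -1) ∧ (∀ i j, i ≠ j → 0 ≤ A i j) ∧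
    (∀ i, f = ∑ j, A i j * (n j : ℤ))

theorem IsArf.mem_of_add_eq_two_mul {S : Set ℕ} (h : IsArf S) {x y z : ℕ} (hx : x ∈ S)
    (hy : y ∈ S) (hxy : x ≤ y) (hz : z + x = 2 * y) : z ∈ S := by
  simpa [show 2 * y - x = z by omega] using h x hx y hy hxy

theorem HasConductor.sub_one_notMem {S : Set ℕ} {s : ℕ} (h : HasConductor S s) (hs : 0 < s) :
    s - 1 ∉ S := by
  intro hmem
  have : s ≤ s - 1 := h.2 _ fun n hn => by
    rcases hn.eq_or_lt with rfl | hlt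
    · exact hmem
    · exact h.1 n (by omega)
  omega

theorem AddSubmonoid.mem_of_le_of_modEq {M : AddSubmonoid ℕ} {m a b : ℕ} (hm : m ∈ M)
    (ha : a ∈ M) (hab : a ≤ b) (h : a ≡ b [MOD m]) : b ∈ M := by
  obtain ⟨k, hk⟩ := (Nat.modEq_iff_dvd' hab).mp h
  rw [← Nat.add_sub_of_le hab, hk, mul_comm, ← smul_eq_mul]
  exact M.add_mem ha (M.nsmul_mem hm k)

section MultiplicityFive

variable {M : AddSubmonoid ℕ} {s : ℕ}

theorem exists_mem_mod_five_eq_one (hArf : IsArf M) (h5 : 5 ∈ M) {n : ℕ} (hn : n ∈ M)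
    (hndvd : ¬ 5 ∣ n) (hns : n < s) (hmod : s % 5 = 2) : ∃ m ∈ M, m % 5 = 1 ∧ m < s := by
  obtain ⟨q, r, hr, rfl⟩ : ∃ q r, r < 5 ∧ n = 5 * q + r :=
    ⟨n / 5, n % 5, Nat.mod_lt _ (by norm_num), (Nat.div_add_mod n 5).symm⟩
  have hfive_mul : ∀ k, 5 * k ∈ M := fun k => by simpa [mul_comm] using M.nsmul_mem h5 k
  interval_cases r
  · omega
  · exact ⟨5 * q + 1, hn, by omega, hns⟩
  all_goals refine ⟨5 * q + 6, ?_, by omega, by omega⟩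
  · have h4 : 5 * q + 4 ∈ M := hArf.mem_of_add_eq_two_mul (hfive_mul q) hn (by omega) (by omega)
    exact hArf.mem_of_add_eq_two_mul hn h4 (by omega) (by omega)
  · exact hArf.mem_of_add_eq_two_mul (hfive_mul q) hn (by omega) (by omega)
  · have h5 : 5 * q + 5 ∈ M := by simpa [mul_add] using hfive_mul (q + 1)
    exact hArf.mem_of_add_eq_two_mul hn h5 (by omega) (by omega)

theorem mem_iff_five_dvd_or_le (hArf : IsArf M) (h5 : 5 ∈ M) (hcon : HasConductor M s)
    (hmod : s % 5 = 2) (n : ℕ) : n ∈ M ↔ 5 ∣ n ∨ s ≤ n := by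
  refine ⟨fun hn => ?_, ?_⟩
  · by_contra! h
    obtain ⟨m, hm, hm1, hms⟩ := exists_mem_mod_five_eq_one hArf h5 hn h.1 h.2 hmod
    refine hcon.sub_one_notMem (by omega) (M.mem_of_le_of_modEq h5 hm (by omega) ?_)
    unfold Nat.ModEq
    omega
  · rintro (⟨k, rfl⟩ | h)
    · simpa [mul_comm] using M.nsmul_mem h5 k
    · exact hcon.1 n h

theorem eq_closure_of_mem_iff (hmod : s % 5 = 2) (hM : ∀ n, n ∈ M ↔ 5 ∣ n ∨ s ≤ n) :
    M = AddSubmonoid.closure {5, s, s + 1, s + 2, s + 4} := by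
  set N := AddSubmonoid.closure ({5, s, s + 1, s + 2, s + 4} : Set ℕ)
  refine le_antisymm (fun n hn => ?_) (AddSubmonoid.closure_le.mpr ?_)
  · have hgen : ∀ g ∈ ({5, s, s + 1, s + 2, s + 4} : Set ℕ),
        g ≤ n → g % 5 = n % 5 → n ∈ N :=
      fun g hg => N.mem_of_le_of_modEq (AddSubmonoid.subset_closure (by simp))
        (AddSubmonoid.subset_closure hg)
    rcases Nat.eq_zero_or_pos n with rfl | hn0
    · exact N.zero_mem
    have hns := (hM n).mp hn
    have : n % 5 = 0 ∨ n % 5 = 1 ∨ n % 5 = 2 ∨ n % 5 = 3 ∨ n % 5 = 4 := by omega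
    rcases this with h | h | h | h | h
    · exact hgen 5 (by simp) (by omega) (by omega)
    · exact hgen (s + 4) (by simp) (by omega) (by omega)
    · exact hgen s (by simp) (by omega) (by omega)
    · exact hgen (s + 1) (by simp) (by omega) (by omega)
    · exact hgen (s + 2) (by simp) (by omega) (by omega)
  · rintro g (rfl | rfl | rfl | rfl | rfl) <;> exact (hM _).mpr (by omega)

end MultiplicityFive

theorem pseudoFrobeniusSet_eq_of_mem_iff {S : Set ℕ} {s : ℕ} (hs : 5 < s) (hmod : s % 5 = 2)
    (hS : ∀ n, n ∈ S ↔ 5 ∣ n ∨ s ≤ n) :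
    pseudoFrobeniusSet S = {s - 5, s - 4, s - 3, s - 1} := by
  ext z
  simp only [pseudoFrobeniusSet, Set.mem_ofPred_eq, Set.mem_insert_iff, Set.mem_singleton_iff,
    hS]
  refine ⟨fun ⟨hz, hz5⟩ => ?_, fun hz => ⟨by omega, fun n hn hn0 => by omega⟩⟩
  have := hz5 5 (by omega) (by omega)
  omega

theorem representation_of_lt_two_mul {s t a b c d e : ℤ} (hs : 0 < s) (ha : 0 ≤ a)
    (hb : 0 ≤ b) (hc : 0 ≤ c) (hd : 0 ≤ d) (he : 0 ≤ e)
    (h : 5 * a + b * s + c * (s + 1) + d * (s + 2) + e * (s + 4) = t) (ht : t < 2 * s) :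
    t = 5 * a ∧ b = 0 ∧ c = 0 ∧ d = 0 ∧ e = 0 ∨
    t = 5 * a + s ∧ b = 1 ∧ c = 0 ∧ d = 0 ∧ e = 0 ∨
    t = 5 * a + (s + 1) ∧ b = 0 ∧ c = 1 ∧ d = 0 ∧ e = 0 ∨
    t = 5 * a + (s + 2) ∧ b = 0 ∧ c = 0 ∧ d = 1 ∧ e = 0 ∨
    t = 5 * a + (s + 4) ∧ b = 0 ∧ c = 0 ∧ d = 0 ∧ e = 1 := by
  have key : t = 5 * a + (b + c + d + e) * s + (c + 2 * d + 4 * e) := by linear_combination -h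
  have hlt : (b + c + d + e) * s < 2 * s := by linarith
  have hsum_lt : b + c + d + e < 2 := lt_of_mul_lt_mul_right hlt hs.le
  rcases (show b + c + d + e = 0 ∨ b + c + d + e = 1 by omega) with hsum | hsum <;>
    rw [hsum] at key <;> omega

theorem eq_of_isRFMatrix {s : ℕ} (hmod : s % 5 = 2) {A : Matrix (Fin 5) (Fin 5) ℤ}
    (hA : IsRFMatrix ![5, s, s + 1, s + 2, s + 4] ((s : ℤ) - 5) A) :
    A = !![-1, 1, 0, 0, 0;
           ((s : ℤ) - 7) / 5, -1, 0, 1, 0;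
           (2 * (s : ℤ) - 4) / 5, 0, -1, 0, 0;
           ((s : ℤ) - 7) / 5, 0, 0, -1, 1;
           ((s : ℤ) - 2) / 5, 0, 1, 0, -1] := by
  obtain ⟨hdiag, hpos, hrow⟩ := hA
  have hrow' (i : Fin 5) : (s : ℤ) - 5 = 5 * A i 0 + A i 1 * s + A i 2 * (s + 1)
      + A i 3 * (s + 2) + A i 4 * (s + 4) := by
    rw [hrow i, Fin.sum_univ_five]
    simp only [Matrix.cons_val_zero, Matrix.cons_val_one, Matrix.cons_val, Nat.cast_add,
      Nat.cast_one, Nat.cast_ofNat]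
    ring
  have hs' : (0 : ℤ) < s := by omega
  have row0 : A 0 1 = 1 ∧ A 0 2 = 0 ∧ A 0 3 = 0 ∧ A 0 4 = 0 := by
    have := representation_of_lt_two_mul (t := s) hs' le_rfl (hpos 0 1 (by decide))
      (hpos 0 2 (by decide)) (hpos 0 3 (by decide)) (hpos 0 4 (by decide))
      (by linear_combination -hrow' 0 - 5 * hdiag 0) (by omega)
    omega
  have row1 : A 1 0 = (s - 7) / 5 ∧ A 1 2 = 0 ∧ A 1 3 = 1 ∧ A 1 4 = 0 := by
    have := representation_of_lt_two_mul (t := 2 * s - 5) hs' (hpos 1 0 (by decide)) le_rfl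
      (hpos 1 2 (by decide)) (hpos 1 3 (by decide)) (hpos 1 4 (by decide))
      (by linear_combination -hrow' 1 - s * hdiag 1) (by omega)
    omega
  have row2 : A 2 0 = (2 * s - 4) / 5 ∧ A 2 1 = 0 ∧ A 2 3 = 0 ∧ A 2 4 = 0 := by
    have := representation_of_lt_two_mul (t := 2 * s - 4) hs' (hpos 2 0 (by decide))
      (hpos 2 1 (by decide)) le_rfl (hpos 2 3 (by decide)) (hpos 2 4 (by decide))
      (by linear_combination -hrow' 2 - (s + 1) * hdiag 2) (by omega)
    omega
  have row3 : A 3 0 = (s - 7) / 5 ∧ A 3 1 = 0 ∧ A 3 2 = 0 ∧ A 3 4 = 1 := by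
    have := representation_of_lt_two_mul (t := 2 * s - 3) hs' (hpos 3 0 (by decide))
      (hpos 3 1 (by decide)) (hpos 3 2 (by decide)) le_rfl (hpos 3 4 (by decide))
      (by linear_combination -hrow' 3 - (s + 2) * hdiag 3) (by omega)
    omega
  have row4 : A 4 0 = (s - 2) / 5 ∧ A 4 1 = 0 ∧ A 4 2 = 1 ∧ A 4 3 = 0 := by
    have := representation_of_lt_two_mul (t := 2 * s - 1) hs' (hpos 4 0 (by decide))
      (hpos 4 1 (by decide)) (hpos 4 2 (by decide)) (hpos 4 3 (by decide)) le_rfl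
      (by linear_combination -hrow' 4 - (s + 4) * hdiag 4) (by omega)
    omega
  ext i j
  fin_cases i <;> fin_cases j <;> simp [hdiag, row0, row1, row2, row3, row4]

theorem isRFMatrix_of_mod_eq_two {s : ℕ} (hs : 5 < s) (hmod : s % 5 = 2) :
    IsRFMatrix ![5, s, s + 1, s + 2, s + 4] ((s : ℤ) - 5)
      !![-1, 1, 0, 0, 0;
         ((s : ℤ) - 7) / 5, -1, 0, 1, 0;
         (2 * (s : ℤ) - 4) / 5, 0, -1, 0, 0;
         ((s : ℤ) - 7) / 5, 0, 0, -1, 1;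
         ((s : ℤ) - 2) / 5, 0, 1, 0, -1] := by
  refine ⟨fun i => by fin_cases i <;> rfl, fun i j hij => ?_, fun i => ?_⟩
  · fin_cases i <;> fin_cases j <;> simp at hij ⊢ <;> omega
  · fin_cases i <;> simp [Fin.sum_univ_five] <;> omega

/-- Arf numerical semigroup with multiplicity `5`, conductor `s > 5`,
`s ≡ 2 (mod 5)`: `S = ⟨5, s, s+1, s+2, s+4⟩`, `PF(S) = {s-5, s-4, s-3, s-1}`, and the
unique RF-matrix of `s-5` is as displayed. -/
theorem arf_mult_five_mod_two (S : Set ℕ) (s : ℕ)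
    (hNS : IsNumericalSemigroup S) (hArf : IsArf S)
    (hmul : HasMultiplicity S 5) (hcon : HasConductor S s)
    (hs : 5 < s) (hmod : s % 5 = 2) :
    S = (AddSubmonoid.closure ({5, s, s + 1, s + 2, s + 4} : Set ℕ) : Set ℕ) ∧
    pseudoFrobeniusSet S = {s - 5, s - 4, s - 3, s - 1} ∧
    (∀ A : Matrix (Fin 5) (Fin 5) ℤ,
      IsRFMatrix ![5, s, s + 1, s + 2, s + 4] ((s : ℤ) - 5) A ↔
        A = !![-1, 1, 0, 0, 0;
               ((s : ℤ) - 7) / 5, -1, 0, 1, 0;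
               (2 * (s : ℤ) - 4) / 5, 0, -1, 0, 0;
               ((s : ℤ) - 7) / 5, 0, 0, -1, 1;
               ((s : ℤ) - 2) / 5, 0, 1, 0, -1]) := by
  obtain ⟨M, rfl⟩ : ∃ M : AddSubmonoid ℕ, (M : Set ℕ) = S :=
    ⟨{ carrier := S, add_mem' := fun ha hb => hNS.2.1 _ ha _ hb, zero_mem' := hNS.1 }, rfl⟩
  have hM := mem_iff_five_dvd_or_le hArf hmul.1 hcon hmod
  exact ⟨congrArg _ (eq_closure_of_mem_iff hmod hM), pseudoFrobeniusSet_eq_of_mem_iff hs hmod hM,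
    fun A => ⟨eq_of_isRFMatrix hmod, fun hA => hA ▸ isRFMatrix_of_mod_eq_two hs hmod⟩⟩
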